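/- arXiv:1903.09925 — 2 statements merged into one kernel-verified Lean document; each statement's English description precedes it below -/
import Mathlib

section
/- Let κ > 0 and N ≥ 2. The function Z(x_1, ..., x_N) = ∏_{i<j} (x_i − x_j)^{−2/κ} on the chamber {x_1 < ... < x_N} satisfies D_i^R Z = 0 for i = 1, ..., N, where D_i^R = (κ/2) ∂²_{x_i} − 2 ∑_{j ≠ i} [ (1/(x_j − x_i)) ∂_{x_j} − h_κ^R/(x_j − x_i)² ] and h_κ^R = −(κ+6)/(2κ). -/
open Finset

/-- Partial derivative in the `i`-th coordinate of a function on `ℝ^N`. -/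
noncomputable def pderiv' {N : ℕ} (i : Fin N) (f : (Fin N → ℝ) → ℝ)
    (x : Fin N → ℝ) : ℝ :=
  deriv (fun s => f (Function.update x i s)) (x i)


lemma triple_id {a b c : ℝ} (hab : a ≠ b) (hac : a ≠ c) (hbc : b ≠ c) :
    (a-b)⁻¹*(a-c)⁻¹ + (b-a)⁻¹*(b-c)⁻¹ + (c-a)⁻¹*(c-b)⁻¹ = 0 := by
  have h1 : a - b ≠ 0 := sub_ne_zero.2 hab
  have h2 : a - c ≠ 0 := sub_ne_zero.2 hac
  have h3 : b - c ≠ 0 := sub_ne_zero.2 hbc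
  have h4 : b - a ≠ 0 := sub_ne_zero.2 hab.symm
  have h5 : c - a ≠ 0 := sub_ne_zero.2 hac.symm
  have h6 : c - b ≠ 0 := sub_ne_zero.2 hbc.symm
  field_simp; ring

lemma cross_vanish {N : ℕ} (i : Fin N) (x : Fin N → ℝ)
    (hx : ∀ j k : Fin N, j ≠ k → x j ≠ x k) :
    ∑ j ∈ univ.erase i, ∑ k ∈ (univ.erase i).erase j,
      ((x i - x j)⁻¹ * (x i - x k)⁻¹ + 2 * ((x j - x i)⁻¹ * (x j - x k)⁻¹)) = 0 := by
  classical
  set s : Finset (Fin N) := univ.erase i with hs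
  have step : ∀ j ∈ s, ∑ k ∈ s.erase j,
      ((x i - x j)⁻¹ * (x i - x k)⁻¹ + 2 * ((x j - x i)⁻¹ * (x j - x k)⁻¹))
      = ∑ k ∈ s, if k ≠ j then
          ((x i - x j)⁻¹ * (x i - x k)⁻¹ + 2 * ((x j - x i)⁻¹ * (x j - x k)⁻¹)) else 0 := by
    intro j hj
    rw [← Finset.filter_ne', Finset.sum_filter]
  rw [Finset.sum_congr rfl step, ← Finset.sum_product']
  refine Finset.sum_involution (fun p _ => (p.2, p.1)) ?_ ?_ ?_ ?_
  · rintro ⟨j, k⟩ hp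
    by_cases hjk : j = k
    · simp [hjk]
    · simp only [ne_eq, hjk, Ne.symm hjk, not_false_iff, if_true]
      have hji : j ≠ i := (Finset.mem_erase.1 (Finset.mem_product.1 hp).1).1
      have hki : k ≠ i := (Finset.mem_erase.1 (Finset.mem_product.1 hp).2).1
      have := triple_id (hx i j hji.symm) (hx i k hki.symm) (hx j k hjk)
      linear_combination 2 * this
  · rintro ⟨j, k⟩ hp hne
    intro h
    apply hne
    have hj : k = j := congrArg Prod.fst h
    simp [hj]
  · rintro ⟨j, k⟩ hp
    exact Finset.mem_product.2 ⟨(Finset.mem_product.1 hp).2, (Finset.mem_product.1 hp).1⟩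
  · rintro ⟨j, k⟩ hp
    rfl

lemma coulomb_core {N : ℕ} (i : Fin N) (x : Fin N → ℝ)
    (hx : ∀ j k : Fin N, j ≠ k → x j ≠ x k) :
    (∑ j ∈ univ.erase i, (x i - x j)⁻¹)^2
      + 2 * ∑ j ∈ univ.erase i, (x j - x i)⁻¹ * ∑ k ∈ univ.erase j, (x j - x k)⁻¹
      - 3 * ∑ j ∈ univ.erase i, ((x i - x j)⁻¹)^2 = 0 := by
  classical
  set s : Finset (Fin N) := univ.erase i with hs
  have hsq : (∑ j ∈ s, (x i - x j)⁻¹)^2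
      = ∑ j ∈ s, ((x i - x j)⁻¹)^2
        + ∑ j ∈ s, ∑ k ∈ s.erase j, (x i - x j)⁻¹ * (x i - x k)⁻¹ := by
    rw [sq, Finset.sum_mul_sum, ← Finset.sum_add_distrib]
    refine Finset.sum_congr rfl fun j hj => ?_
    rw [← Finset.add_sum_erase _ _ hj, sq]
  have hmid : ∀ j ∈ s, (x j - x i)⁻¹ * ∑ k ∈ univ.erase j, (x j - x k)⁻¹
      = ((x i - x j)⁻¹)^2 + ∑ k ∈ s.erase j, (x j - x i)⁻¹ * (x j - x k)⁻¹ := by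
    intro j hj
    have hji : j ≠ i := (Finset.mem_erase.1 hj).1
    have hmem : i ∈ univ.erase j := Finset.mem_erase.2 ⟨hji.symm, Finset.mem_univ _⟩
    rw [← Finset.add_sum_erase _ _ hmem, Finset.erase_right_comm, ← hs, mul_add, Finset.mul_sum]
    congr 1
    have : x j - x i ≠ 0 := sub_ne_zero.2 (hx j i hji)
    have h2 : x i - x j ≠ 0 := sub_ne_zero.2 (hx i j hji.symm)
    field_simp; ring
  rw [hsq, Finset.sum_congr rfl hmid]
  have hcv := cross_vanish i x hx
  rw [← hs] at hcv
  simp only [Finset.sum_add_distrib, ← Finset.mul_sum] at hcv ⊢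
  linarith [hcv]

noncomputable def zf {N : ℕ} (κ : ℝ) (x : Fin N → ℝ) : ℝ :=
  ∏ p ∈ Finset.univ.filter (fun p : Fin N × Fin N => p.1 < p.2), (x p.1 - x p.2) ^ (-2 / κ)

lemma hasDerivAt_zf {N : ℕ} (κ : ℝ) (i : Fin N) (x : Fin N → ℝ)
    (hx : ∀ j k : Fin N, j ≠ k → x j ≠ x k) :
    HasDerivAt (fun s => zf κ (Function.update x i s))
      ((-2/κ) * zf κ x * ∑ j ∈ univ.erase i, (x i - x j)⁻¹) (x i) := by
  classical
  set A : Finset (Fin N × Fin N) := univ.filter (fun p : Fin N × Fin N => p.1 < p.2) with hA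
  set a : ℝ := -2/κ with ha
  set f : (Fin N × Fin N) → ℝ → ℝ :=
    fun p s => (Function.update x i s p.1 - Function.update x i s p.2) ^ a with hf
  set d : (Fin N × Fin N) → ℝ := fun p =>
    if p.1 = i then a * (x i - x p.2) ^ (a - 1)
    else if p.2 = i then -(a * (x p.1 - x i) ^ (a - 1))
    else 0 with hd
  have key : ∀ p ∈ A, HasDerivAt (f p) (d p) (x i) := by
    rintro ⟨p1, p2⟩ hp
    have hlt : p1 < p2 := (Finset.mem_filter.1 hp).2
    have hp12 : p1 ≠ p2 := ne_of_lt hlt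
    by_cases h1 : p1 = i
    · have h2 : p2 ≠ i := h1 ▸ hp12.symm
      have hfp : f (p1, p2) = fun s => (s - x p2) ^ a := by
        funext s; simp [hf, h1, Function.update_of_ne h2]
      have hne : x i - x p2 ≠ 0 := sub_ne_zero.2 (hx i p2 (Ne.symm h2))
      have hder := ((hasDerivAt_id (x i)).sub_const (x p2)).rpow_const (p := a) (Or.inl hne)
      rw [hfp, hd]
      simpa [h1, h2] using hder
    · by_cases h2 : p2 = i
      · have hfp : f (p1, p2) = fun s => (x p1 - s) ^ a := by
          funext s; simp [hf, h2, Function.update_of_ne h1]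
        have hne : x p1 - x i ≠ 0 := sub_ne_zero.2 (hx p1 i h1)
        have hder := ((hasDerivAt_const (x i) (x p1)).fun_sub (hasDerivAt_id (x i))).rpow_const
          (p := a) (Or.inl hne)
        rw [hfp, hd]
        simp only [h1, h2, if_false, if_true, if_neg h1, if_pos rfl]
        simp only [id_eq] at hder
        convert hder using 1
        ring
      · have hfp : f (p1, p2) = fun _ => (x p1 - x p2) ^ a := by
          funext s; simp [hf, Function.update_of_ne h1, Function.update_of_ne h2]
        rw [hfp, hd]
        simpa [h1, h2] using hasDerivAt_const (x i) ((x p1 - x p2) ^ a)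
  have hprod := HasDerivAt.fun_finsetProd key
  have hZfun : (fun s => zf κ (Function.update x i s)) = (∏ p ∈ A, f p ·) := by
    funext s; rfl
  have hfx : ∀ q, f q (x i) = (x q.1 - x q.2) ^ a := by
    intro q; simp [hf, Function.update_eq_self]
  -- rewrite the derivative value
  have hval : ∑ p ∈ A, (∏ q ∈ A.erase p, f q (x i)) • d p
      = a * zf κ x * ∑ j ∈ univ.erase i, (x i - x j)⁻¹ := by
    set c : (Fin N × Fin N) → ℝ := fun p =>
      if p.1 = i then a * (x i - x p.2)⁻¹
      else if p.2 = i then a * (x i - x p.1)⁻¹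
      else 0 with hc
    have hzf : zf κ x = ∏ q ∈ A, f q (x i) :=
      Finset.prod_congr rfl (fun q _ => (hfx q).symm)
    have hterm : ∀ p ∈ A, (∏ q ∈ A.erase p, f q (x i)) • d p = zf κ x * c p := by
      rintro ⟨p1, p2⟩ hp
      have hlt : p1 < p2 := (Finset.mem_filter.1 hp).2
      have hp12 : p1 ≠ p2 := ne_of_lt hlt
      rw [smul_eq_mul, hzf, ← Finset.mul_prod_erase A (fun q => f q (x i)) hp]
      by_cases h1 : p1 = i
      · have h2 : p2 ≠ i := h1 ▸ hp12.symm
        have hne : x i - x p2 ≠ 0 := sub_ne_zero.2 (hx i p2 (Ne.symm h2))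
        have hdp : d (p1, p2) = a * (x i - x p2) ^ (a - 1) := by
          rw [hd]; exact if_pos h1
        have hcp : c (p1, p2) = a * (x i - x p2)⁻¹ := by
          rw [hc]; exact if_pos h1
        have hfpx : f (p1, p2) (x i) = (x i - x p2) ^ a := by
          rw [hfx]; rw [h1]
        rw [hdp, hcp, hfpx, Real.rpow_sub_one hne]
        ring
      · by_cases h2 : p2 = i
        · have hne : x p1 - x i ≠ 0 := sub_ne_zero.2 (hx p1 i h1)
          have hne' : x i - x p1 ≠ 0 := sub_ne_zero.2 (hx i p1 (Ne.symm h1))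
          have hdp : d (p1, p2) = -(a * (x p1 - x i) ^ (a - 1)) := by
            rw [hd]; exact (if_neg h1).trans (if_pos h2)
          have hcp : c (p1, p2) = a * (x i - x p1)⁻¹ := by
            rw [hc]; exact (if_neg h1).trans (if_pos h2)
          have hfpx : f (p1, p2) (x i) = (x p1 - x i) ^ a := by
            rw [hfx]; rw [h2]
          rw [hdp, hcp, hfpx, Real.rpow_sub_one hne]
          field_simp
          ring
        · have hdp : d (p1, p2) = 0 := by
            rw [hd]; exact (if_neg h1).trans (if_neg h2)
          have hcp : c (p1, p2) = 0 := by
            rw [hc]; exact (if_neg h1).trans (if_neg h2)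
          rw [hdp, hcp]
          ring
    have hsum : ∑ p ∈ A, c p = ∑ j ∈ univ.erase i, a * (x i - x j)⁻¹ := by
      have hfilter : ∑ p ∈ A.filter (fun p => p.1 = i ∨ p.2 = i), c p = ∑ p ∈ A, c p := by
        refine Finset.sum_filter_of_ne ?_
        rintro ⟨p1, p2⟩ hp hne
        by_contra hcon
        push_neg at hcon
        apply hne
        rw [hc]
        exact (if_neg hcon.1).trans (if_neg hcon.2)
      rw [← hfilter]
      refine Finset.sum_nbij' (i := fun p => if p.1 = i then p.2 else p.1)
        (j := fun j => if i < j then (i, j) else (j, i)) ?_ ?_ ?_ ?_ ?_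
      · rintro ⟨p1, p2⟩ hp
        obtain ⟨hpA, hpor⟩ := Finset.mem_filter.1 hp
        have hlt : p1 < p2 := (Finset.mem_filter.1 hpA).2
        dsimp only
        split_ifs with h
        · exact Finset.mem_erase.2 ⟨ne_of_gt (h ▸ hlt), Finset.mem_univ _⟩
        · exact Finset.mem_erase.2 ⟨h, Finset.mem_univ _⟩
      · intro j hj
        have hji : j ≠ i := (Finset.mem_erase.1 hj).1
        split_ifs with h
        · exact Finset.mem_filter.2 ⟨Finset.mem_filter.2 ⟨Finset.mem_univ _, h⟩, Or.inl rfl⟩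
        · exact Finset.mem_filter.2 ⟨Finset.mem_filter.2
            ⟨Finset.mem_univ _, lt_of_le_of_ne (not_lt.1 h) hji⟩, Or.inr rfl⟩
      · rintro ⟨p1, p2⟩ hp
        obtain ⟨hpA, hpor⟩ := Finset.mem_filter.1 hp
        have hlt : p1 < p2 := (Finset.mem_filter.1 hpA).2
        dsimp only
        split_ifs with h h2 h3
        · exact Prod.ext (h.symm) rfl
        · exact absurd (h ▸ hlt) h2
        · rcases hpor with h1' | h2'
          · exact absurd h1' h
          · have e : p2 = i := h2'
            exact absurd h3 (not_lt.2 (e ▸ hlt).le)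
        · rcases hpor with h1' | h2'
          · exact absurd h1' h
          · have e : p2 = i := h2'
            exact Prod.ext rfl e.symm
      · intro j hj
        have hji : j ≠ i := (Finset.mem_erase.1 hj).1
        split_ifs with h h2
        · rfl
        · exact absurd rfl h2
        · rfl
      · rintro ⟨p1, p2⟩ hp
        obtain ⟨hpA, hpor⟩ := Finset.mem_filter.1 hp
        have hlt : p1 < p2 := (Finset.mem_filter.1 hpA).2
        rw [hc]
        dsimp only
        split_ifs with h h2
        · rfl
        · rfl
        · rcases hpor with h1' | h2'
          · exact absurd h1' h
          · exact absurd h2' h2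
    rw [Finset.sum_congr rfl hterm, ← Finset.mul_sum, hsum, ← Finset.mul_sum]
    ring
  rw [hZfun, ← hval]
  exact hprod

lemma pderiv_eq {N : ℕ} (κ : ℝ) (j : Fin N) (x : Fin N → ℝ)
    (hx : ∀ a b : Fin N, a ≠ b → x a ≠ x b) :
    deriv (fun s => zf κ (Function.update x j s)) (x j)
      = (-2/κ) * zf κ x * ∑ k ∈ univ.erase j, (x j - x k)⁻¹ :=
  (hasDerivAt_zf κ j x hx).deriv

lemma update_inj {N : ℕ} (i : Fin N) (x : Fin N → ℝ) (s : ℝ)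
    (hx : ∀ a b : Fin N, a ≠ b → x a ≠ x b)
    (hs : ∀ k ∈ univ.erase i, s ≠ x k) :
    ∀ a b : Fin N, a ≠ b → Function.update x i s a ≠ Function.update x i s b := by
  intro a b hab
  by_cases hai : a = i
  · subst hai
    have hbi : b ≠ a := hab.symm
    rw [Function.update_self, Function.update_of_ne hbi]
    exact hs b (Finset.mem_erase.2 ⟨hbi, Finset.mem_univ _⟩)
  · by_cases hbi : b = i
    · subst hbi
      rw [Function.update_self, Function.update_of_ne hai]
      exact fun h => (hs a (Finset.mem_erase.2 ⟨hai, Finset.mem_univ _⟩)) h.symm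
    · rw [Function.update_of_ne hai, Function.update_of_ne hbi]
      exact hx a b hab

lemma pderiv2_eq {N : ℕ} (κ : ℝ) (i : Fin N) (x : Fin N → ℝ)
    (hx : ∀ a b : Fin N, a ≠ b → x a ≠ x b) :
    deriv (fun s => deriv (fun t => zf κ (Function.update (Function.update x i s) i t))
        (Function.update x i s i)) (x i)
      = (-2/κ)^2 * zf κ x * (∑ j ∈ univ.erase i, (x i - x j)⁻¹)^2
        - (-2/κ) * zf κ x * ∑ j ∈ univ.erase i, ((x i - x j)⁻¹)^2 := by
  classical
  set a : ℝ := -2/κ with ha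
  -- the first partial derivative agrees near x i with an explicit formula
  have hev : ∀ᶠ s in nhds (x i), ∀ k ∈ univ.erase i, s ≠ x k := by
    rw [Filter.eventually_all_finset]
    intro k hk
    exact eventually_ne_nhds (hx i k (Finset.mem_erase.1 hk).1.symm)
  have heq : ∀ᶠ s in nhds (x i),
      deriv (fun t => zf κ (Function.update (Function.update x i s) i t))
          (Function.update x i s i)
        = a * zf κ (Function.update x i s) * ∑ k ∈ univ.erase i, (s - x k)⁻¹ := by
    filter_upwards [hev] with s hs
    have hinj := update_inj i x s hx hs
    have h1 := pderiv_eq κ i (Function.update x i s) hinj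
    rw [h1]
    congr 1
    refine Finset.sum_congr rfl fun k hk => ?_
    have hki : k ≠ i := (Finset.mem_erase.1 hk).1
    rw [Function.update_self, Function.update_of_ne hki]
  -- differentiate the explicit formula
  have hW : HasDerivAt (fun s => ∑ k ∈ univ.erase i, (s - x k)⁻¹)
      (∑ k ∈ univ.erase i, -(1 : ℝ) / (x i - x k)^2) (x i) := by
    refine HasDerivAt.fun_sum fun k hk => ?_
    have hki : k ≠ i := (Finset.mem_erase.1 hk).1
    have hne : x i - x k ≠ 0 := sub_ne_zero.2 (hx i k hki.symm)
    simpa using ((hasDerivAt_id (x i)).sub_const (x k)).fun_inv hne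
  have hZu : HasDerivAt (fun s => a * zf κ (Function.update x i s))
      (a * (a * zf κ x * ∑ j ∈ univ.erase i, (x i - x j)⁻¹)) (x i) :=
    (hasDerivAt_zf κ i x hx).const_mul a
  have hG := hZu.fun_mul hW
  rw [Filter.EventuallyEq.deriv_eq heq, hG.deriv]
  rw [Function.update_eq_self]
  have hsum : ∑ k ∈ univ.erase i, -(1:ℝ)/(x i - x k)^2
      = -∑ k ∈ univ.erase i, ((x i - x k)⁻¹)^2 := by
    rw [← Finset.sum_neg_distrib]
    refine Finset.sum_congr rfl fun k hk => ?_
    rw [inv_pow]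
    ring
  rw [hsum]
  ring

/-- The reverse-flow Coulomb gas function `Z(x) = ∏_{i<j} (x_i − x_j)^{−2/κ}` is
annihilated on the chamber `{x_1 < ⋯ < x_N}` by the operators
`D_i^R = (κ/2) ∂²_{x_i} − 2 ∑_{j≠i} [ (1/(x_j−x_i)) ∂_{x_j} − h_κ^R/(x_j−x_i)² ]`
with `h_κ^R = −(κ+6)/(2κ)`. -/
theorem coulomb_gas_annihilated_reverse (N : ℕ) (hN : 2 ≤ N) (κ : ℝ) (hκ : 0 < κ)
    (Z : (Fin N → ℝ) → ℝ)
    (hZ : Z = fun x => ∏ p ∈ Finset.univ.filter (fun p : Fin N × Fin N => p.1 < p.2),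
      (x p.1 - x p.2) ^ (-2 / κ)) :
    ∀ x : Fin N → ℝ, StrictMono x → ∀ i : Fin N,
      κ / 2 * pderiv' i (pderiv' i Z) x
        - 2 * ∑ j ∈ Finset.univ.erase i,
            (1 / (x j - x i) * pderiv' j Z x
              - (-(κ + 6) / (2 * κ)) / (x j - x i) ^ 2 * Z x) = 0 := by
  have hZzf : Z = zf κ := hZ
  subst hZzf
  intro x hmono i
  have hκ' : κ ≠ 0 := ne_of_gt hκ
  have hx : ∀ a b : Fin N, a ≠ b → x a ≠ x b := fun a b hab => hmono.injective.ne hab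
  have h2 : pderiv' i (pderiv' i (zf κ)) x
      = (-2/κ)^2 * zf κ x * (∑ j ∈ univ.erase i, (x i - x j)⁻¹)^2
        - (-2/κ) * zf κ x * ∑ j ∈ univ.erase i, ((x i - x j)⁻¹)^2 := pderiv2_eq κ i x hx
  have h1 : ∀ j : Fin N, pderiv' j (zf κ) x
      = (-2/κ) * zf κ x * ∑ k ∈ univ.erase j, (x j - x k)⁻¹ :=
    fun j => (hasDerivAt_zf κ j x hx).deriv
  have hsum : ∑ j ∈ Finset.univ.erase i,
        (1 / (x j - x i) * pderiv' j (zf κ) x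
          - (-(κ + 6) / (2 * κ)) / (x j - x i) ^ 2 * zf κ x)
      = (-2/κ) * zf κ x *
          (∑ j ∈ univ.erase i, (x j - x i)⁻¹ * ∑ k ∈ univ.erase j, (x j - x k)⁻¹)
        - (-(κ + 6) / (2 * κ)) * zf κ x * ∑ j ∈ univ.erase i, ((x i - x j)⁻¹)^2 := by
    rw [Finset.mul_sum, Finset.mul_sum, ← Finset.sum_sub_distrib]
    refine Finset.sum_congr rfl fun j hj => ?_
    have hji : j ≠ i := (Finset.mem_erase.1 hj).1
    have hne : x j - x i ≠ 0 := sub_ne_zero.2 (hx j i hji)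
    have hne' : x i - x j ≠ 0 := sub_ne_zero.2 (hx i j hji.symm)
    rw [h1 j]
    field_simp
    ring
  rw [h2, hsum]
  have hcore := coulomb_core i x hx
  set S := ∑ j ∈ univ.erase i, (x i - x j)⁻¹
  set T := ∑ j ∈ univ.erase i, ((x i - x j)⁻¹)^2
  set U := ∑ j ∈ univ.erase i, (x j - x i)⁻¹ * ∑ k ∈ univ.erase j, (x j - x k)⁻¹
  field_simp
  linear_combination (2 * zf κ x) * hcore
end

section
/- Fix real parameters κ, γ > 0 with κ = γ², set Q = 2/γ + γ/2, and fix N ≥ 1. Let y_1, ..., y_N be distinct reals and z ∈ ℍ. Then the 'drift coefficient' −(4/√κ) (∑_i 1/(z−y_i))² + (2/√κ) ∑_i F_i/(z−y_i) − √κ ∑_i 1/(z−y_i)² + 2Q ∑_i 1/(z−y_i)² equals (2/√κ) ∑_i (1/(z−y_i)) (F_i − ∑_{j≠i} 4/(y_i−y_j)). In particular, it vanishes for all z ∈ ℍ if F_i = ∑_{j≠i} 4/(y_i − y_j) for each i. -/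
open Finset Complex

/-- The drift-coefficient identity at the heart of the key martingale lemma:
with `κ = γ²`, `Q = 2/γ + γ/2`, distinct reals `y_i`, arbitrary reals `F_i`, and
`z ∈ ℍ`, the drift coefficient
`−(4/√κ)(∑ 1/(z−y_i))² + (2/√κ)∑ F_i/(z−y_i) − √κ ∑ 1/(z−y_i)² + 2Q ∑ 1/(z−y_i)²`
equals `(2/√κ) ∑ (1/(z−y_i)) (F_i − ∑_{j≠i} 4/(y_i−y_j))`; in particular it vanishes
when `F_i = ∑_{j≠i} 4/(y_i−y_j)`. -/
theorem drift_coefficient_identity (N : ℕ) (hN : 1 ≤ N) (κ γ : ℝ) (hγ : 0 < γ)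
    (hκγ : κ = γ ^ 2) (Q : ℝ) (hQ : Q = 2 / γ + γ / 2)
    (y : Fin N → ℝ) (hy : ∀ i j, i ≠ j → y i ≠ y j)
    (F : Fin N → ℝ) (z : ℂ) (hz : 0 < z.im) :
    (-(4 / (Real.sqrt κ : ℂ)) * (∑ i, 1 / (z - (y i : ℂ))) ^ 2
        + (2 / (Real.sqrt κ : ℂ)) * ∑ i, (F i : ℂ) / (z - (y i : ℂ))
        - (Real.sqrt κ : ℂ) * ∑ i, 1 / (z - (y i : ℂ)) ^ 2
        + 2 * (Q : ℂ) * ∑ i, 1 / (z - (y i : ℂ)) ^ 2)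
      = (2 / (Real.sqrt κ : ℂ)) * ∑ i, (1 / (z - (y i : ℂ)))
          * ((F i : ℂ) - ∑ j ∈ Finset.univ.erase i, 4 / ((y i : ℂ) - (y j : ℂ)))
    ∧ ((∀ i, F i = ∑ j ∈ Finset.univ.erase i, 4 / (y i - y j)) →
        (-(4 / (Real.sqrt κ : ℂ)) * (∑ i, 1 / (z - (y i : ℂ))) ^ 2
          + (2 / (Real.sqrt κ : ℂ)) * ∑ i, (F i : ℂ) / (z - (y i : ℂ))
          - (Real.sqrt κ : ℂ) * ∑ i, 1 / (z - (y i : ℂ)) ^ 2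
          + 2 * (Q : ℂ) * ∑ i, 1 / (z - (y i : ℂ)) ^ 2) = 0) := by
  have hsk : (Real.sqrt κ : ℝ) = γ := by rw [hκγ, Real.sqrt_sq hγ.le]
  have hγ0 : (γ : ℂ) ≠ 0 := by exact_mod_cast hγ.ne'
  have hzy : ∀ i : Fin N, z - (y i : ℂ) ≠ 0 := by
    intro i h
    have h2 : (z - (y i : ℂ)).im = 0 := by rw [h]; simp
    simp [Complex.sub_im] at h2
    linarith
  have hyy : ∀ i j : Fin N, i ≠ j → ((y i : ℂ) - (y j : ℂ)) ≠ 0 := by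
    intro i j hij h
    apply hy i j hij
    have : ((y i : ℝ) : ℂ) = ((y j : ℝ) : ℂ) := by linear_combination h
    exact_mod_cast this
  set a : Fin N → ℂ := fun i => 1 / (z - (y i : ℂ)) with ha
  -- generic swap for off-diagonal double sums
  have hswap : ∀ f : Fin N → Fin N → ℂ,
      (∑ i, ∑ j ∈ univ.erase i, f i j) = ∑ i, ∑ j ∈ univ.erase i, f j i := by
    intro f
    rw [Finset.sum_comm' (s' := fun j => univ.erase j) (t' := univ)]
    intro i j
    simp [and_comm, ne_comm, eq_comm]
  -- square expansion
  have hsq : (∑ i, a i) ^ 2 = (∑ i, a i ^ 2) + ∑ i, ∑ j ∈ univ.erase i, a i * a j := by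
    rw [sq, Finset.sum_mul_sum, ← Finset.sum_add_distrib]
    refine Finset.sum_congr rfl fun i _ => ?_
    rw [← Finset.add_sum_erase _ _ (mem_univ i), sq]
  -- partial fractions + symmetrization: P = 2T
  have hP : (∑ i, ∑ j ∈ univ.erase i, a i * a j)
      = 2 * ∑ i, ∑ j ∈ univ.erase i, a i / ((y i : ℂ) - (y j : ℂ)) := by
    have h1 : (∑ i, ∑ j ∈ univ.erase i, a i * a j)
        = ∑ i, ∑ j ∈ univ.erase i,
            (a i / ((y i : ℂ) - y j) - a j / ((y i : ℂ) - y j)) := by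
      refine Finset.sum_congr rfl fun i _ => Finset.sum_congr rfl fun j hj => ?_
      have hij : i ≠ j := (Finset.ne_of_mem_erase hj).symm
      have h1 := hzy i; have h2 := hzy j; have h3 := hyy i j hij
      simp only [ha]
      field_simp
      ring
    rw [h1]
    have h2 : (∑ i, ∑ j ∈ univ.erase i, a j / ((y i : ℂ) - y j))
        = -∑ i, ∑ j ∈ univ.erase i, a i / ((y i : ℂ) - y j) := by
      rw [hswap (fun i j => a j / ((y i : ℂ) - y j)), ← Finset.sum_neg_distrib]
      refine Finset.sum_congr rfl fun i _ => ?_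
      rw [← Finset.sum_neg_distrib]
      refine Finset.sum_congr rfl fun j hj => ?_
      have hij : i ≠ j := (Finset.ne_of_mem_erase hj).symm
      rw [show ((y j : ℂ) - y i) = -((y i : ℂ) - y j) from by ring, div_neg]
    simp only [Finset.sum_sub_distrib]
    rw [h2]; ring
  -- expand RHS
  have hRHS : (∑ i, a i * ((F i : ℂ) - ∑ j ∈ univ.erase i, 4 / ((y i : ℂ) - (y j : ℂ))))
      = (∑ i, (F i : ℂ) * a i)
        - 4 * ∑ i, ∑ j ∈ univ.erase i, a i / ((y i : ℂ) - (y j : ℂ)) := by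
    rw [Finset.mul_sum, ← Finset.sum_sub_distrib]
    refine Finset.sum_congr rfl fun i _ => ?_
    rw [mul_sub, Finset.mul_sum, Finset.mul_sum]
    congr 1
    · ring
    · refine Finset.sum_congr rfl fun j hj => ?_
      rw [div_eq_mul_inv, div_eq_mul_inv]; ring
  have hF : ∀ i, (F i : ℂ) / (z - (y i : ℂ)) = (F i : ℂ) * a i := by
    intro i; rw [ha]; ring
  have main : (-(4 / (Real.sqrt κ : ℂ)) * (∑ i, a i) ^ 2
        + (2 / (Real.sqrt κ : ℂ)) * ∑ i, (F i : ℂ) / (z - (y i : ℂ))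
        - (Real.sqrt κ : ℂ) * ∑ i, a i ^ 2
        + 2 * (Q : ℂ) * ∑ i, a i ^ 2)
      = (2 / (Real.sqrt κ : ℂ)) * ∑ i, a i
          * ((F i : ℂ) - ∑ j ∈ univ.erase i, 4 / ((y i : ℂ) - (y j : ℂ))) := by
    simp only [hF]
    rw [hsq, hP, hRHS]
    have hskC : (Real.sqrt κ : ℂ) = (γ : ℂ) := by exact_mod_cast hsk
    have hQC : (Q : ℂ) = 2 / γ + γ / 2 := by rw [hQ]; push_cast; ring
    rw [hskC, hQC]
    field_simp
    ring
  have hpow : (∑ i, 1 / (z - (y i : ℂ)) ^ 2) = ∑ i, a i ^ 2 :=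
    Finset.sum_congr rfl fun i _ => by rw [ha]; simp [div_pow]
  constructor
  · rw [hpow]; exact main
  · intro hFeq
    have hz0 : ∀ i, (F i : ℂ) - ∑ j ∈ univ.erase i, 4 / ((y i : ℂ) - (y j : ℂ)) = 0 := by
      intro i
      rw [hFeq i]
      push_cast
      ring_nf
    rw [hpow, main, Finset.sum_eq_zero fun i _ => by rw [hz0 i, mul_zero], mul_zero]
end
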